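/- arXiv:2201.13339 — 5 statements merged into one kernel-verified Lean document; each statement's English description precedes it below -/
import Mathlib

section
/- For all real numbers x > 0 and y > 0 and any real p > 1, one has x^p * e^y ≤ e^y * (1+y)^p + C(p) * e^{2x}, where C(p) = p * e^{-1} * sup over x>0 of x^p e^{-x} is a constant depending only on p. More precisely, x^p e^y - e^y (1+y)^p ≤ p e^{x-1} x^p for all x, y > 0. -/
open Real

/-- Either `x ≤ 1 + y` and the left side is nonpositive, or `y ≤ x - 1` and the subtracted term
can be dropped. -/
theorem exp_mul_rpow_sub_one_add_rpow_le {p x y : ℝ} (hx : 0 ≤ x) (hy : 0 ≤ 1 + y)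
    (hp : 0 ≤ p) : exp y * (x ^ p - (1 + y) ^ p) ≤ exp (x - 1) * x ^ p := by
  rcases le_or_gt x (1 + y) with hxy | hxy
  · have hle : x ^ p ≤ (1 + y) ^ p := rpow_le_rpow hx hxy hp
    calc exp y * (x ^ p - (1 + y) ^ p) ≤ 0 :=
          mul_nonpos_of_nonneg_of_nonpos (exp_pos y).le (sub_nonpos.mpr hle)
      _ ≤ exp (x - 1) * x ^ p := by positivity
  · calc exp y * (x ^ p - (1 + y) ^ p) ≤ exp y * x ^ p := by
          gcongr
          exact sub_le_self _ (rpow_nonneg hy p)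
      _ ≤ exp (x - 1) * x ^ p := by gcongr; linarith

/-- Elementary inequality: for `x, y > 0` and `p > 1`,
`x^p e^y - e^y (1+y)^p ≤ p e^{x-1} x^p`, hence `x^p e^y ≤ e^y (1+y)^p + C(p) e^{2x}`. -/
theorem stmt0 (p x y : ℝ) (hx : 0 < x) (hy : 0 < y) (hp : 1 < p) :
    x ^ p * Real.exp y - Real.exp y * (1 + y) ^ p ≤ p * Real.exp (x - 1) * x ^ p := by
  calc x ^ p * exp y - exp y * (1 + y) ^ p = exp y * (x ^ p - (1 + y) ^ p) := by ring
    _ ≤ exp (x - 1) * x ^ p :=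
      exp_mul_rpow_sub_one_add_rpow_le hx.le (by linarith) (by linarith)
    _ ≤ p * exp (x - 1) * x ^ p := by
      rw [mul_assoc]
      exact le_mul_of_one_le_left (by positivity) hp.le
end

section
/- Let φ: [0,∞) → [0,∞) be monotone decreasing and suppose there exist constants B₀ > 0, δ > 0 and s₀ ≥ 0 such that for all s ≥ s₀ and all r > 0 one has r * φ(s+r) ≤ B₀ * φ(s)^{1+δ}. Then φ(s) = 0 for all s ≥ s₀ + 2 B₀ φ(s₀)^δ / (1 - 2^{-δ}). -/
/-!
Put `s_{n+1} = s_n + r_n` with `r_n = 2 B₀ φ(s_n)^δ`. The hypothesis with `r = r_n` reads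
`r_n φ(s_{n+1}) ≤ r_n φ(s_n) / 2`, so `φ(s_n) ≤ φ(s₀) / 2ⁿ` and hence
`r_n ≤ 2 B₀ φ(s₀)^δ (2^{-δ})ⁿ`.
Summing the geometric series, every `s_n` lies below the threshold, and monotonicity gives
`φ(s) ≤ φ(s₀) / 2ⁿ` for every `n` and every `s` beyond it.
-/

theorem sub_le_div_one_sub_of_sub_le_mul_pow {K : Type*} [Field K] [LinearOrder K]
    [IsStrictOrderedRing K] {a : ℕ → K} {C x : K} (hC : 0 ≤ C) (hx₀ : 0 ≤ x) (hx₁ : x < 1)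
    (ha : ∀ k, a (k + 1) - a k ≤ C * x ^ k) (n : ℕ) : a n - a 0 ≤ C / (1 - x) :=
  calc a n - a 0 = ∑ k ∈ Finset.range n, (a (k + 1) - a k) := (Finset.sum_range_sub a n).symm
    _ ≤ ∑ k ∈ Finset.range n, C * x ^ k := Finset.sum_le_sum fun k _ => ha k
    _ = C * ∑ k ∈ Finset.Ico 0 n, x ^ k := by rw [Finset.mul_sum, Finset.range_eq_Ico]
    _ ≤ C * (x ^ 0 / (1 - x)) := mul_le_mul_of_nonneg_left (geom_sum_Ico_le_of_lt_one hx₀ hx₁) hC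
    _ = C / (1 - x) := by ring

theorem Real.div_pow_rpow {a b : ℝ} (ha : 0 ≤ a) (hb : 0 < b) (n : ℕ) (δ : ℝ) :
    (a / b ^ n) ^ δ = a ^ δ * (b ^ (-δ)) ^ n := by
  rw [Real.div_rpow ha (by positivity), ← Real.rpow_pow_comm hb.le, Real.rpow_neg hb.le, inv_pow,
    div_eq_mul_inv]

theorem nonpos_of_forall_le_div_pow {y c b : ℝ} (hb : 1 < b) (h : ∀ n : ℕ, y ≤ c / b ^ n) :
    y ≤ 0 :=
  ge_of_tendsto' (tendsto_const_nhds.div_atTop (tendsto_pow_atTop_atTop_of_one_lt hb)) h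

namespace DeGiorgi

noncomputable def step (φ : ℝ → ℝ) (B₀ δ s : ℝ) : ℝ := s + 2 * B₀ * φ s ^ δ

variable {φ : ℝ → ℝ} {B₀ δ s₀ : ℝ}

theorem self_le_step {s : ℝ} (hφ : 0 ≤ φ s) (hB₀ : 0 ≤ B₀) : s ≤ step φ B₀ δ s :=
  le_add_of_nonneg_right (by positivity)

theorem apply_step_le_half {s : ℝ} (hφ : 0 ≤ φ s) (hB₀ : 0 < B₀) (hδ : 0 < δ)
    (h : ∀ r, 0 < r → r * φ (s + r) ≤ B₀ * φ s ^ (1 + δ)) : φ (step φ B₀ δ s) ≤ φ s / 2 := by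
  rcases hφ.eq_or_lt with hzero | hφ_pos
  · simp [step, ← hzero, Real.zero_rpow hδ.ne']
  · set r := 2 * B₀ * φ s ^ δ
    have hr_pos : 0 < r := by positivity
    have hrhs : B₀ * φ s ^ (1 + δ) = r * (φ s / 2) := by
      rw [Real.rpow_add hφ_pos, Real.rpow_one]; ring
    exact le_of_mul_le_mul_left (hrhs ▸ h r hr_pos) hr_pos

theorem le_iterate_step (hpos : ∀ s, 0 ≤ φ s) (hB₀ : 0 ≤ B₀) (n : ℕ) :
    s₀ ≤ (step φ B₀ δ)^[n] s₀ :=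
  Function.id_le_iterate_of_id_le (fun s => self_le_step (hpos s) hB₀) n s₀

section
variable (hpos : ∀ s, 0 ≤ φ s) (hB₀ : 0 < B₀) (hδ : 0 < δ)
  (h : ∀ s, s₀ ≤ s → ∀ r, 0 < r → r * φ (s + r) ≤ B₀ * φ s ^ (1 + δ))
include hpos hB₀ hδ h

theorem apply_iterate_step_le (n : ℕ) : φ ((step φ B₀ δ)^[n] s₀) ≤ φ s₀ / 2 ^ n := by
  induction n with
  | zero => simp
  | succ n ih =>
    rw [Function.iterate_succ_apply', pow_succ, ← div_div]
    exact (apply_step_le_half (hpos _) hB₀ hδ (h _ (le_iterate_step hpos hB₀.le n))).trans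
      (div_le_div_of_nonneg_right ih zero_le_two)

theorem iterate_step_succ_sub_le (n : ℕ) :
    (step φ B₀ δ)^[n + 1] s₀ - (step φ B₀ δ)^[n] s₀ ≤ 2 * B₀ * φ s₀ ^ δ * (2 ^ (-δ)) ^ n := by
  rw [Function.iterate_succ_apply', step, add_sub_cancel_left, mul_assoc _ (φ s₀ ^ δ),
    ← Real.div_pow_rpow (hpos s₀) two_pos]
  exact mul_le_mul_of_nonneg_left
    (Real.rpow_le_rpow (hpos _) (apply_iterate_step_le hpos hB₀ hδ h n) hδ.le) (by positivity)

theorem iterate_step_le (n : ℕ) :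
    (step φ B₀ δ)^[n] s₀ ≤ s₀ + 2 * B₀ * φ s₀ ^ δ / (1 - 2 ^ (-δ)) := by
  have hφ₀ := hpos s₀
  have := sub_le_div_one_sub_of_sub_le_mul_pow (a := fun n => (step φ B₀ δ)^[n] s₀)
    (by positivity) (by positivity)
    (Real.rpow_lt_one_of_one_lt_of_neg one_lt_two (neg_neg_of_pos hδ))
    (iterate_step_succ_sub_le hpos hB₀ hδ h) n
  simp only [Function.iterate_zero, id_eq] at this
  linarith

end

end DeGiorgi

/-- De Giorgi iteration lemma: if `φ : [0,∞) → [0,∞)` is monotone decreasing and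
`r φ(s+r) ≤ B₀ φ(s)^{1+δ}` for all `s ≥ s₀`, `r > 0`, then `φ(s) = 0` for all
`s ≥ s₀ + 2 B₀ φ(s₀)^δ / (1 - 2^{-δ})`. -/
theorem stmt3 (φ : ℝ → ℝ) (hpos : ∀ s, 0 ≤ φ s) (hmono : AntitoneOn φ (Set.Ici 0))
    (B₀ δ s₀ : ℝ) (hB₀ : 0 < B₀) (hδ : 0 < δ) (hs₀ : 0 ≤ s₀)
    (h : ∀ s, s₀ ≤ s → ∀ r, 0 < r → r * φ (s + r) ≤ B₀ * φ s ^ (1 + δ)) :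
    ∀ s, s₀ + 2 * B₀ * φ s₀ ^ δ / (1 - (2 : ℝ) ^ (-δ)) ≤ s → φ s = 0 := by
  intro s hs
  refine le_antisymm (nonpos_of_forall_le_div_pow (c := φ s₀) one_lt_two fun n => ?_) (hpos s)
  have h_ge : s₀ ≤ (DeGiorgi.step φ B₀ δ)^[n] s₀ := DeGiorgi.le_iterate_step hpos hB₀.le n
  have h_le := (DeGiorgi.iterate_step_le hpos hB₀ hδ h n).trans hs
  exact (hmono (hs₀.trans h_ge) (hs₀.trans (h_ge.trans h_le)) h_le).trans
    (DeGiorgi.apply_iterate_step_le hpos hB₀ hδ h n)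
end

section
/- Let f: [0,T] → ℝ be a decreasing differentiable function. Suppose there exist C₀ > 0 and α ∈ (0,1] such that for every ε > 0 and every t ∈ [0,T], (1/ε) ∫_{t-ε}^{t} f(τ) dτ - f(t) ≤ C₀ ε^α, where f is extended by f(τ) = f(0) for τ < 0. Then there is a constant C (depending on C₀ and α) such that |f(t) - f(s)| ≤ C |t - s|^α for all s, t ∈ [0,T]. -/
/-!
For `s < t`, average over `[t - ε, t]` with `ε = 2 (t - s)`: by monotonicity the integrand is at
least `f s` on the first half and at least `f t` on the second, so the average exceeds `f t` by at
least `(f s - f t) / 2`. The hypothesis then gives `f s - f t ≤ 2 C₀ (2 (t - s)) ^ α`.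
-/

open MeasureTheory intervalIntegral Set

lemma AntitoneOn.comp_max_zero {f : ℝ → ℝ} {T : ℝ} (hf : AntitoneOn f (Icc 0 T)) (hT : 0 ≤ T) :
    AntitoneOn (fun τ => f (max τ 0)) (Iic T) :=
  hf.comp_MonotoneOn (fun _ _ _ _ hxy => max_le_max hxy le_rfl)
    fun _ hx => ⟨le_max_right _ _, max_le hx hT⟩

lemma AntitoneOn.intervalIntegrable_of_le {g : ℝ → ℝ} {a b : ℝ} (hab : a ≤ b)
    (hg : AntitoneOn g (Icc a b)) : IntervalIntegrable g volume a b :=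
  (hg.mono (uIcc_of_le hab).subset).intervalIntegrable

lemma AntitoneOn.sub_mul_le_intervalIntegral {g : ℝ → ℝ} {a b : ℝ} (hab : a ≤ b)
    (hg : AntitoneOn g (Icc a b)) : (b - a) * g b ≤ ∫ τ in a..b, g τ := by
  simpa using integral_mono_on hab intervalIntegrable_const (hg.intervalIntegrable_of_le hab)
    fun x hx => hg hx (right_mem_Icc.2 hab) hx.2

lemma AntitoneOn.sub_le_two_mul_average_sub {g : ℝ → ℝ} {t ε : ℝ} (hε : 0 < ε)
    (hg : AntitoneOn g (Icc (t - ε) t)) :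
    g (t - ε / 2) - g t ≤ 2 * ((1 / ε) * (∫ τ in (t - ε)..t, g τ) - g t) := by
  set m := t - ε / 2 with hm
  have ham : t - ε ≤ m := by linarith
  have hmt : m ≤ t := by linarith
  have hleft := hg.mono (Icc_subset_Icc_right hmt)
  have hright := hg.mono (Icc_subset_Icc_left ham)
  have hsplit := integral_add_adjacent_intervals
    (hleft.intervalIntegrable_of_le ham) (hright.intervalIntegrable_of_le hmt)
  have hhalves : ε / 2 * (g m + g t) ≤ ∫ τ in (t - ε)..t, g τ := by
    calc ε / 2 * (g m + g t) = (m - (t - ε)) * g m + (t - m) * g t := by rw [hm]; ring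
      _ ≤ _ := hsplit ▸ add_le_add (hleft.sub_mul_le_intervalIntegral ham)
        (hright.sub_mul_le_intervalIntegral hmt)
  have haverage : (g m + g t) / 2 ≤ (1 / ε) * ∫ τ in (t - ε)..t, g τ := by
    rw [one_div_mul_eq_div, le_div_iff₀ hε]
    linarith
  linarith

lemma AntitoneOn.abs_sub_le_of_sub_le {f : ℝ → ℝ} {S : Set ℝ} {C α : ℝ} (hf : AntitoneOn f S)
    (hα : 0 < α) (h : ∀ s ∈ S, ∀ t ∈ S, s < t → f s - f t ≤ C * (t - s) ^ α) :
    ∀ s ∈ S, ∀ t ∈ S, |f t - f s| ≤ C * |t - s| ^ α := by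
  intro s hs t ht
  wlog hst : s ≤ t generalizing s t
  · rw [abs_sub_comm, abs_sub_comm t]
    exact this t ht s hs (le_of_not_ge hst)
  rcases hst.eq_or_lt with rfl | hlt
  · simp [Real.zero_rpow hα.ne']
  · rw [abs_sub_comm, abs_of_nonneg (sub_nonneg.2 (hf hs ht hst)), abs_of_pos (sub_pos.2 hlt)]
    exact h s hs t ht hlt

theorem stmt4_general (T : ℝ) (f : ℝ → ℝ)
    (hmono : AntitoneOn f (Set.Icc 0 T))
    (C₀ α : ℝ) (hC₀ : 0 < C₀) (hα : 0 < α)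
    (h : ∀ ε > (0 : ℝ), ∀ t ∈ Set.Icc (0 : ℝ) T,
      (1 / ε) * (∫ τ in (t - ε)..t, f (max τ 0)) - f t ≤ C₀ * ε ^ α) :
    ∃ C > (0 : ℝ), ∀ s ∈ Set.Icc (0 : ℝ) T, ∀ t ∈ Set.Icc (0 : ℝ) T,
      |f t - f s| ≤ C * |t - s| ^ α := by
  refine ⟨2 ^ (1 + α) * C₀, by positivity, hmono.abs_sub_le_of_sub_le hα ?_⟩
  intro s hs t ht hst
  have hε : 0 < 2 * (t - s) := by linarith
  have hext : AntitoneOn (fun τ => f (max τ 0)) (Icc (t - 2 * (t - s)) t) :=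
    (hmono.comp_max_zero (hs.1.trans hs.2)).mono (Icc_subset_Iic_self.trans (Iic_subset_Iic.2 ht.2))
  have key := hext.sub_le_two_mul_average_sub hε
  rw [show t - 2 * (t - s) / 2 = s by ring, max_eq_left hs.1, max_eq_left ht.1] at key
  calc f s - f t ≤ 2 * (C₀ * (2 * (t - s)) ^ α) := key.trans (by gcongr; exact h _ hε t ht)
    _ = 2 ^ (1 + α) * C₀ * (t - s) ^ α := by
      rw [Real.mul_rpow zero_le_two (sub_pos.2 hst).le, Real.rpow_add two_pos, Real.rpow_one]; ring

/-- If `f` is decreasing and differentiable on `[0,T]` (extended by `f(0)` for negative times)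
and the backward `ε`-averages satisfy `(1/ε)∫_{t-ε}^t f - f(t) ≤ C₀ ε^α`, then `f` is
`α`-Hölder continuous on `[0,T]`. -/
theorem stmt4 (T : ℝ) (hT : 0 < T) (f : ℝ → ℝ)
    (hmono : AntitoneOn f (Set.Icc 0 T)) (hdiff : DifferentiableOn ℝ f (Set.Icc 0 T))
    (C₀ α : ℝ) (hC₀ : 0 < C₀) (hα : 0 < α) (hα1 : α ≤ 1)
    (h : ∀ ε > (0 : ℝ), ∀ t ∈ Set.Icc (0 : ℝ) T,
      (1 / ε) * (∫ τ in (t - ε)..t, f (max τ 0)) - f t ≤ C₀ * ε ^ α) :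
    ∃ C > (0 : ℝ), ∀ s ∈ Set.Icc (0 : ℝ) T, ∀ t ∈ Set.Icc (0 : ℝ) T,
      |f t - f s| ≤ C * |t - s| ^ α :=
  stmt4_general T f hmono C₀ α hC₀ hα h
end

section
/- Suppose φ, v: [0,T]×M → ℝ are bounded with v ≤ 0, and for each δ ∈ (0,1) and each s₀ ≥ s_*(δ) one has sup(v - φ) ≤ s₀ + C₃ s₀^{-μ} ‖(v-φ)^+‖_{L¹}^μ, where s_*(δ) ≤ max(2‖(v₀-φ₀)^+‖_∞, 2δ‖v‖_∞, C₁ δ^{-a} ‖(v-φ)^+‖_{L¹}) with a = q₀(n+1)/(1-1/β). Then choosing δ = ‖(v-φ)^+‖_{L¹}^{1/(1+q₀(n+1))} and assuming ‖(v-φ)^+‖_{L¹} < 1, for any α < 1/(1+q₀(n+1)) (with μ = α/(1-α) and β large enough so that 1 - a α > α) there is a constant C such that sup_{[0,T]×M}(v - φ) ≤ C max(‖(v₀-φ₀)^+‖_{L^∞}, ‖(v-φ)^+‖_{L¹}^α). -/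
/-!
Write `N = ‖(v-φ)^+‖₁` and take `δ = N^α`, `s₀ = K · max(N₀, N^α)` with `K = max(2, 2‖v‖_∞, C₁)`.
The condition `α < 1 - aα` gives `δ^{-a} N = N^{1-aα} ≤ N^α`, so `s₀` dominates the bound on
`s_*(δ)`; and since `s₀ ≥ N^α` and `μ(1-α) = α`, the correction term `C₃ s₀^{-μ} N^μ` is at most
`C₃ N^α`.
-/

open Real

lemma rpow_neg_div_one_sub_mul_rpow_le {x s α : ℝ} (hx : 0 < x) (hα : 0 ≤ α) (hα1 : α < 1)
    (hs : x ^ α ≤ s) : s ^ (-(α / (1 - α))) * x ^ (α / (1 - α)) ≤ x ^ α := by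
  have hμ : 0 ≤ α / (1 - α) := div_nonneg hα (by linarith)
  calc s ^ (-(α / (1 - α))) * x ^ (α / (1 - α))
      ≤ (x ^ α) ^ (-(α / (1 - α))) * x ^ (α / (1 - α)) := by
        gcongr ?_ * _
        exact rpow_le_rpow_of_nonpos (by positivity) hs (neg_nonpos.mpr hμ)
    _ = x ^ α := by
        rw [← rpow_mul hx.le, ← rpow_add hx]
        congr 1
        field_simp [show 1 - α ≠ 0 by linarith]
        ring

lemma rpow_rpow_neg_mul_le {x α a : ℝ} (hx0 : 0 < x) (hx1 : x ≤ 1) (h : α ≤ 1 - a * α) :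
    (x ^ α) ^ (-a) * x ≤ x ^ α := by
  conv_lhs => rw [← rpow_mul hx0.le, ← rpow_add_one hx0.ne']
  exact rpow_le_rpow_of_exponent_ge hx0 hx1 (by linarith)

-- The bound on `s_*(δ)` at `δ = N^α`.
lemma max_threshold_le {N N₀ V C α a : ℝ} (hN : 0 < N) (hN1 : N ≤ 1) (hN₀ : 0 ≤ N₀)
    (h : α ≤ 1 - a * α) :
    max (2 * N₀) (max (2 * N ^ α * V) (C * (N ^ α) ^ (-a) * N)) ≤
      max 2 (max (2 * V) C) * max N₀ (N ^ α) := by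
  have hT : 0 ≤ max N₀ (N ^ α) := le_max_of_le_left hN₀
  refine max_le ?_ (max_le ?_ ?_)
  · gcongr
    exacts [le_max_left _ _, le_max_left _ _]
  · calc 2 * N ^ α * V = 2 * V * N ^ α := by ring
      _ ≤ _ := by gcongr; exacts [le_max_of_le_right (le_max_left _ _), le_max_right _ _]
  · calc C * (N ^ α) ^ (-a) * N = C * ((N ^ α) ^ (-a) * N) := by ring
      _ ≤ _ := by
        gcongr
        · exact le_max_of_le_right (le_max_right _ _)
        · exact (rpow_rpow_neg_mul_le hN hN1 h).trans (le_max_right _ _)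

theorem stmt15_general (n : ℕ) (q₀ : ℝ) (hq₀ : 1 < q₀)
    (C₁ C₃ Vb : ℝ) (hC₃ : 0 < C₃)
    (α a muv : ℝ) (hα : 0 < α) (hαlt : α < 1 / (1 + q₀ * ((n : ℝ) + 1)))
    (hβa : α < 1 - a * α)
    (hmuv : muv = α / (1 - α)) :
    ∃ C > (0 : ℝ), ∀ S N1 N0 : ℝ, ∀ sstar : ℝ → ℝ,
      0 < N1 → N1 < 1 → 0 ≤ N0 →
      (∀ δ : ℝ, 0 < δ → δ < 1 → ∀ s₀ : ℝ, sstar δ ≤ s₀ →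
        S ≤ s₀ + C₃ * s₀ ^ (-muv) * N1 ^ muv) →
      (∀ δ : ℝ, 0 < δ → δ < 1 →
        sstar δ ≤ max (2 * N0) (max (2 * δ * Vb) (C₁ * δ ^ (-a) * N1))) →
      S ≤ C * max N0 (N1 ^ α) := by
  have hα1 : α < 1 := hαlt.trans_le <| (div_le_one₀ (by positivity)).mpr <| by
    nlinarith [show (0 : ℝ) ≤ n from n.cast_nonneg]
  set K := max 2 (max (2 * Vb) C₁)
  refine ⟨K + C₃, by positivity, fun S N1 N0 sstar hN1 hN1_lt hN0 hS hsstar ↦ ?_⟩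
  set T := max N0 (N1 ^ α)
  have hδ : 0 < N1 ^ α := rpow_pos_of_pos hN1 α
  have hδ_lt : N1 ^ α < 1 := rpow_lt_one hN1.le hN1_lt hα
  have hδT : N1 ^ α ≤ T := le_max_right _ _
  have hs₀ : N1 ^ α ≤ K * T := by
    nlinarith [le_max_left 2 (max (2 * Vb) C₁)]
  have hstar : sstar (N1 ^ α) ≤ K * T :=
    (hsstar _ hδ hδ_lt).trans (max_threshold_le hN1 hN1_lt.le hN0 hβa.le)
  calc S ≤ K * T + C₃ * (K * T) ^ (-muv) * N1 ^ muv := hS _ hδ hδ_lt _ hstar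
    _ ≤ K * T + C₃ * T := by
        rw [mul_assoc, hmuv]
        gcongr
        exact (rpow_neg_div_one_sub_mul_rpow_le hN1 hα.le hα1 hs₀).trans hδT
    _ = (K + C₃) * T := by ring

/-- The optimization step in the stability theorem: from the abstract inequalities
`sup(v-φ) ≤ s₀ + C₃ s₀^{-μ} ‖(v-φ)^+‖₁^μ` (valid for `s₀ ≥ s_*(δ)`) and the bound
`s_*(δ) ≤ max(2‖(v₀-φ₀)^+‖_∞, 2δ‖v‖_∞, C₁ δ^{-a} ‖(v-φ)^+‖₁)`, choosing
`δ = ‖(v-φ)^+‖₁^{1/(1+q₀(n+1))}`, one obtains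
`sup(v-φ) ≤ C max(‖(v₀-φ₀)^+‖_∞, ‖(v-φ)^+‖₁^α)` for any `α < 1/(1+q₀(n+1))`. -/
theorem stmt15 (n : ℕ) (hn : 1 ≤ n) (q₀ : ℝ) (hq₀ : 1 < q₀)
    (C₁ C₃ Vb : ℝ) (hC₁ : 0 < C₁) (hC₃ : 0 < C₃) (hVb : 0 ≤ Vb)
    (α β a muv : ℝ) (hα : 0 < α) (hαlt : α < 1 / (1 + q₀ * ((n : ℝ) + 1)))
    (hβ : 1 < β) (ha : a = q₀ * ((n : ℝ) + 1) / (1 - 1 / β)) (hβa : α < 1 - a * α)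
    (hmuv : muv = α / (1 - α)) :
    ∃ C > (0 : ℝ), ∀ S N1 N0 : ℝ, ∀ sstar : ℝ → ℝ,
      0 < N1 → N1 < 1 → 0 ≤ N0 →
      (∀ δ : ℝ, 0 < δ → δ < 1 → ∀ s₀ : ℝ, sstar δ ≤ s₀ →
        S ≤ s₀ + C₃ * s₀ ^ (-muv) * N1 ^ muv) →
      (∀ δ : ℝ, 0 < δ → δ < 1 →
        sstar δ ≤ max (2 * N0) (max (2 * δ * Vb) (C₁ * δ ^ (-a) * N1))) →
      S ≤ C * max N0 (N1 ^ α) :=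
  stmt15_general n q₀ hq₀ C₁ C₃ Vb hC₃ α a muv hα hαlt hβa hmuv
end

section
/- Let h: (0,∞) → ℝ be defined for fixed ε > 0, γ ∈ (0,1), K > 0, and fixed functions a(s) (increasing with lim_{s→0⁺} a(s) = a₀). Suppose Φ(x) = inf_{0<s≤ε} (a(s) + K s² − K ε² − ε^γ log(s/ε)) satisfies Φ − a₀ ≤ C ε^γ. Then for any θ ∈ (0,1) with log(1/θ) > C + K, one has a(θε) − a₀ ≤ (C+K) ε^γ. -/
/-!
Write `g(s) = a(s) + K s²` and `c = ε^γ`. Every value of the infimand is bounded below by one of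
two quantities, according to the position of `s` relative to `θε`: for `s ≤ θε` the logarithm
contributes at least `c log(1/θ)` on top of `a₀ ≤ g(s)`; for `s ≥ θε` monotonicity gives
`g(s) ≥ g(θε)` and the logarithm is nonpositive. The hypothesis `log(1/θ) > C + K`, together with
`ε² ≤ ε^γ`, makes the first bound exceed `a₀ + C ε^γ ≥ Φ`, so `Φ` is controlled by the second,
which bounds `a(θε)`.
-/

open Set Filter Topology Real

theorem MonotoneOn.le_of_tendsto_nhdsGT {α β : Type*} [TopologicalSpace α] [LinearOrder α]
    [OrderTopology α] [DenselyOrdered α] [TopologicalSpace β] [Preorder β]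
    [OrderClosedTopology β] {f : α → β} {a b : α} {l : β} (hf : MonotoneOn f (Ioc a b))
    (hlim : Tendsto f (𝓝[>] a) (𝓝 l)) {s : α} (hs : s ∈ Ioc a b) : l ≤ f s := by
  have : (𝓝[>] a).NeBot := nhdsGT_neBot_of_exists_gt ⟨s, hs.1⟩
  refine le_of_tendsto hlim ?_
  filter_upwards [Ioc_mem_nhdsGT hs.1] with t ht
  exact hf ⟨ht.1, ht.2.trans hs.2⟩ hs ht.2

theorem pow_two_le_rpow_of_le_one {ε γ : ℝ} (hε : 0 < ε) (hε1 : ε ≤ 1) (hγ : γ ≤ 2) :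
    ε ^ 2 ≤ ε ^ γ := by
  simpa [rpow_two] using rpow_le_rpow_of_exponent_ge hε hε1 hγ

theorem min_le_sub_mul_log_div {g : ℝ → ℝ} {ε θ c a₀ : ℝ} (hε : 0 < ε) (hc : 0 ≤ c)
    (hg : MonotoneOn g (Ioc 0 ε)) (hbelow : ∀ s ∈ Ioc 0 ε, a₀ ≤ g s)
    (hθ0 : 0 < θ) (hθ1 : θ ≤ 1) {s : ℝ} (hs : s ∈ Ioc 0 ε) :
    min (a₀ + c * log (1 / θ)) (g (θ * ε)) ≤ g s - c * log (s / ε) := by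
  rcases le_total s (θ * ε) with hsθ | hθs
  · have hlog : log (s / ε) ≤ -log (1 / θ) := by
      rw [one_div, log_inv, neg_neg]
      exact log_le_log (div_pos hs.1 hε) ((div_le_iff₀ hε).2 hsθ)
    have := hbelow s hs
    have := mul_le_mul_of_nonneg_left hlog hc
    exact min_le_of_left_le (by linarith)
  · have hθε : θ * ε ∈ Ioc 0 ε := ⟨by positivity, mul_le_of_le_one_left hε.le hθ1⟩
    have hlog : log (s / ε) ≤ 0 := log_nonpos (div_pos hs.1 hε).le ((div_le_one hε).2 hs.2)
    have := hg hθε hs hθs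
    have := mul_nonpos_of_nonneg_of_nonpos hc hlog
    exact min_le_of_right_le (by linarith)

theorem min_sub_le_csInf_sub_mul_log_div {g : ℝ → ℝ} {ε θ c a₀ L : ℝ} (hε : 0 < ε)
    (hc : 0 ≤ c) (hg : MonotoneOn g (Ioc 0 ε)) (hbelow : ∀ s ∈ Ioc 0 ε, a₀ ≤ g s)
    (hθ0 : 0 < θ) (hθ1 : θ ≤ 1) :
    min (a₀ + c * log (1 / θ)) (g (θ * ε)) - L ≤
      sInf ((fun s => g s - L - c * log (s / ε)) '' Ioc 0 ε) := by
  refine le_csInf (Nonempty.image _ ⟨ε, hε, le_rfl⟩) ?_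
  rintro _ ⟨s, hs, rfl⟩
  linarith [min_le_sub_mul_log_div hε hc hg hbelow hθ0 hθ1 hs]

theorem stmt16_general (ε γ K C a₀ : ℝ) (a : ℝ → ℝ)
    (hε : 0 < ε) (hε1 : ε ≤ 1) (hγ1 : γ < 1) (hK : 0 < K)
    (hmono : MonotoneOn (fun s => a s + K * s ^ 2) (Set.Ioc 0 ε))
    (hlim : Filter.Tendsto (fun s => a s + K * s ^ 2)
      (nhdsWithin 0 (Set.Ioi 0)) (nhds a₀))
    (hΦ : sInf ((fun s => a s + K * s ^ 2 - K * ε ^ 2 - ε ^ γ * Real.log (s / ε)) ''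
        Set.Ioc 0 ε) - a₀ ≤ C * ε ^ γ)
    (θ : ℝ) (hθ0 : 0 < θ) (hθ1 : θ < 1) (hθ : C + K < Real.log (1 / θ)) :
    a (θ * ε) - a₀ ≤ (C + K) * ε ^ γ := by
  have hc : 0 < ε ^ γ := rpow_pos_of_pos hε γ
  have hKε : K * ε ^ 2 ≤ K * ε ^ γ :=
    mul_le_mul_of_nonneg_left (pow_two_le_rpow_of_le_one hε hε1 (by linarith)) hK.le
  have hinf := min_sub_le_csInf_sub_mul_log_div (L := K * ε ^ 2) hε hc.le hmono
    (fun s hs => hmono.le_of_tendsto_nhdsGT hlim hs) hθ0 hθ1.le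
  rcases min_le_iff.1 (sub_le_iff_le_add.1 (hinf.trans (sub_le_iff_le_add.1 hΦ)))
    with hsmall | hlarge
  · have : ε ^ γ * log (1 / θ) ≤ ε ^ γ * (C + K) := by linarith
    exact absurd (le_of_mul_le_mul_left this hc) hθ.not_ge
  · linarith [mul_nonneg hK.le (sq_nonneg (θ * ε))]

/-- Dichotomy for the Kiselman–Legendre transform: if `a(s) + K s²` is increasing on `(0,ε]`
with limit `a₀` as `s → 0⁺`, and the infimum
`Φ = inf_{0<s≤ε} (a(s) + Ks² - Kε² - ε^γ log(s/ε))` satisfies `Φ - a₀ ≤ C ε^γ`, then for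
any `θ ∈ (0,1)` with `log(1/θ) > C + K`, one has `a(θε) - a₀ ≤ (C+K) ε^γ`. -/
theorem stmt16 (ε γ K C a₀ : ℝ) (a : ℝ → ℝ)
    (hε : 0 < ε) (hε1 : ε ≤ 1) (hγ0 : 0 < γ) (hγ1 : γ < 1) (hK : 0 < K)
    (hmono : MonotoneOn (fun s => a s + K * s ^ 2) (Set.Ioc 0 ε))
    (hlim : Filter.Tendsto (fun s => a s + K * s ^ 2)
      (nhdsWithin 0 (Set.Ioi 0)) (nhds a₀))
    (hΦ : sInf ((fun s => a s + K * s ^ 2 - K * ε ^ 2 - ε ^ γ * Real.log (s / ε)) ''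
        Set.Ioc 0 ε) - a₀ ≤ C * ε ^ γ)
    (θ : ℝ) (hθ0 : 0 < θ) (hθ1 : θ < 1) (hθ : C + K < Real.log (1 / θ)) :
    a (θ * ε) - a₀ ≤ (C + K) * ε ^ γ :=
  stmt16_general ε γ K C a₀ a hε hε1 hγ1 hK hmono hlim hΦ θ hθ0 hθ1 hθ
end
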